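/- Let d, r be coprime positive integers and N sufficiently large. Define M as in the Erdős elimination process applied to Π = r(r+d)⋯(r+(N-1)d) (for each prime factor of Π remove one term of maximal p-adic valuation, M being the number of removed terms). Then either both d < N² and r < N², or M > N/2. -/

import Mathlib

/-!
Put `aᵢ = r + i d`, and let `T` be the set of indices that survive the elimination. For a prime
`p ∤ d`, the indices `i < N` with `p ^ k ∣ aᵢ` are pairwise congruent modulo `p ^ k`, so there
are at most `⌊(N - 1) / p ^ k⌋ + 1` of them; one of them is the removed index of maximal
valuation as soon as there is any. Summing over `k` and comparing with Legendre's formula gives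
`∏_{i ∈ T} aᵢ ∣ (N - 1)!`, while primes dividing `d` divide no `aᵢ` since `gcd(d, r) = 1`.
If `M ≤ N / 2` and `d ≥ N²` or `r ≥ N²`, then every surviving term except possibly `a₀` is at
least `N²`, so the surviving product is at least `N ^ (N - 2) > (N - 1)!`.
-/

open Finset Nat

theorem factorial_lt_pow_succ (n : ℕ) : (n + 2)! < (n + 3) ^ (n + 1) := by
  induction n with
  | zero => decide
  | succ n ih =>
    calc (n + 3)! = (n + 3) * (n + 2)! := factorial_succ _
      _ < (n + 3) * (n + 3) ^ (n + 1) := by gcongr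
      _ = (n + 3) ^ (n + 2) := (pow_succ' _ _).symm
      _ ≤ (n + 4) ^ (n + 2) := by gcongr; omega

theorem padicValNat_eq_card_pow_dvd {p n b : ℕ} [Fact p.Prime] (hn : n ≠ 0)
    (hb : padicValNat p n < b) : padicValNat p n = #{k ∈ Ico 1 b | p ^ k ∣ n} := by
  have : {k ∈ Ico 1 b | p ^ k ∣ n} = Ico 1 (padicValNat p n + 1) := by
    ext k
    simp only [mem_filter, mem_Ico, padicValNat_dvd_iff_le hn]
    omega
  rw [this, card_Ico]
  omega

section ArithmeticProgression

variable {d r N : ℕ}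

theorem modEq_of_dvd_add_mul {q i j : ℕ} (hq : Coprime q d) (hi : q ∣ r + i * d)
    (hj : q ∣ r + j * d) : i ≡ j [MOD q] := by
  have : r + i * d ≡ r + j * d [MOD q] :=
    (modEq_zero_iff_dvd.mpr hi).trans (modEq_zero_iff_dvd.mpr hj).symm
  exact (this.add_left_cancel' r).cancel_right_of_coprime hq

theorem card_filter_dvd_add_mul_le {q : ℕ} (hq : Coprime q d) :
    #{i ∈ range N | q ∣ r + i * d} ≤ (N - 1) / q + 1 := by
  have hmaps : ∀ i ∈ {i ∈ range N | q ∣ r + i * d}, i / q ∈ range ((N - 1) / q + 1) := by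
    intro i hi
    have : i ≤ N - 1 := by simp only [mem_filter, mem_range] at hi; omega
    exact mem_range.mpr (Nat.lt_succ_of_le (Nat.div_le_div_right this))
  have hinj : Set.InjOn (· / q) ↑{i ∈ range N | q ∣ r + i * d} := by
    intro i hi j hj hij
    rw [mem_coe, mem_filter] at hi hj
    have hmod : i % q = j % q := modEq_of_dvd_add_mul hq hi.2 hj.2
    rw [← div_add_mod i q, ← div_add_mod j q, show i / q = j / q from hij, hmod]
  simpa using card_le_card_of_injOn _ hmaps hinj

theorem not_dvd_of_dvd_add_mul {p i : ℕ} (hp : p.Prime) (hdr : Coprime d r)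
    (h : p ∣ r + i * d) : ¬ p ∣ d := by
  intro hpd
  have hpr : p ∣ r := (Nat.dvd_add_left (hpd.mul_left i)).mp h
  exact hp.not_dvd_one (hdr ▸ Nat.dvd_gcd hpd hpr)

variable {p i₀ : ℕ} {T : Finset ℕ}

theorem card_filter_pow_dvd_le (hp : p.Prime) (hd : ¬ p ∣ d) (hr : 0 < r) (hi₀ : i₀ < N)
    (hmax : ∀ j < N, padicValNat p (r + j * d) ≤ padicValNat p (r + i₀ * d))
    (hT : T ⊆ (range N).erase i₀) (k : ℕ) :
    #{i ∈ T | p ^ k ∣ r + i * d} ≤ (N - 1) / p ^ k := by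
  have := Fact.mk hp
  by_cases hk : p ^ k ∣ r + i₀ * d
  · have hmem : i₀ ∈ {i ∈ range N | p ^ k ∣ r + i * d} :=
      mem_filter.mpr ⟨mem_range.mpr hi₀, hk⟩
    have hsub : {i ∈ T | p ^ k ∣ r + i * d} ⊆ {i ∈ range N | p ^ k ∣ r + i * d}.erase i₀ := by
      rw [← filter_erase]
      exact filter_subset_filter _ hT
    have hcount : #{i ∈ range N | p ^ k ∣ r + i * d} ≤ (N - 1) / p ^ k + 1 :=
      card_filter_dvd_add_mul_le ((hp.coprime_iff_not_dvd.mpr hd).pow_left k)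
    calc #{i ∈ T | p ^ k ∣ r + i * d}
        ≤ #{i ∈ range N | p ^ k ∣ r + i * d} - 1 := card_erase_of_mem hmem ▸ card_le_card hsub
      _ ≤ (N - 1) / p ^ k := tsub_le_iff_right.mpr hcount
  · suffices {i ∈ T | p ^ k ∣ r + i * d} = ∅ by simp [this]
    refine filter_eq_empty_iff.mpr fun i hi hdvd => hk ?_
    have hi : i < N := mem_range.mp (mem_of_mem_erase (hT hi))
    rw [padicValNat_dvd_iff_le (by omega)] at hdvd ⊢
    exact hdvd.trans (hmax i hi)

theorem sum_padicValNat_le_padicValNat_factorial (hp : p.Prime) (hd : ¬ p ∣ d) (hr : 0 < r)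
    (hi₀ : i₀ < N)
    (hmax : ∀ j < N, padicValNat p (r + j * d) ≤ padicValNat p (r + i₀ * d))
    (hT : T ⊆ (range N).erase i₀) :
    ∑ i ∈ T, padicValNat p (r + i * d) ≤ padicValNat p (N - 1)! := by
  have := Fact.mk hp
  set b := padicValNat p (r + i₀ * d) + N
  have hlog : log p (N - 1) < b := by have := log_le_self p (N - 1); omega
  calc ∑ i ∈ T, padicValNat p (r + i * d)
      = ∑ i ∈ T, #{k ∈ Ico 1 b | p ^ k ∣ r + i * d} := by
        refine sum_congr rfl fun i hi => padicValNat_eq_card_pow_dvd (by omega) ?_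
        have := hmax i (mem_range.mp (mem_of_mem_erase (hT hi)))
        omega
    _ = ∑ k ∈ Ico 1 b, #{i ∈ T | p ^ k ∣ r + i * d} := by
        simp only [card_filter]
        exact sum_comm
    _ ≤ ∑ k ∈ Ico 1 b, (N - 1) / p ^ k :=
        sum_le_sum fun k _ => card_filter_pow_dvd_le hp hd hr hi₀ hmax hT k
    _ = padicValNat p (N - 1)! := (padicValNat_factorial hlog).symm

theorem prod_sdiff_image_dvd_factorial (hr : 0 < r) (hdr : Coprime d r) {f : ℕ → ℕ}
    (hf : ∀ p ∈ (∏ i ∈ range N, (r + i * d)).primeFactors,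
      f p < N ∧ ∀ j < N, padicValNat p (r + j * d) ≤ padicValNat p (r + f p * d)) :
    ∏ i ∈ range N \ (∏ i ∈ range N, (r + i * d)).primeFactors.image f, (r + i * d) ∣
      (N - 1)! := by
  set P := ∏ i ∈ range N, (r + i * d)
  have hpos : ∀ i, r + i * d ≠ 0 := by omega
  have hP : P ≠ 0 := prod_ne_zero_iff.mpr fun i _ => hpos i
  rw [← factorization_prime_le_iff_dvd (prod_ne_zero_iff.mpr fun i _ => hpos i)
    (factorial_ne_zero _)]
  intro p hp
  rw [factorization_prod fun i _ => hpos i, Finsupp.finsetSum_apply]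
  by_cases hpP : p ∈ P.primeFactors
  · obtain ⟨hfp, hmax⟩ := hf p hpP
    obtain ⟨i, -, hpi⟩ := (hp.prime.dvd_finsetProd_iff _).mp (dvd_of_mem_primeFactors hpP)
    simp only [factorization_def _ hp]
    refine sum_padicValNat_le_padicValNat_factorial hp (not_dvd_of_dvd_add_mul hp hdr hpi) hr
      hfp hmax fun i hi => ?_
    obtain ⟨hiN, hif⟩ := mem_sdiff.mp hi
    exact mem_erase.mpr ⟨fun h => hif (h ▸ mem_image_of_mem f hpP), hiN⟩
  · refine (sum_eq_zero fun i hi => factorization_eq_zero_of_not_dvd fun hpi => hpP ?_).trans_le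
      (zero_le _)
    exact mem_primeFactors.mpr
      ⟨hp, hpi.trans (dvd_prod_of_mem _ (mem_sdiff.mp hi).1), hP⟩

theorem pow_card_erase_zero_le_prod {c : ℕ} (hr : 0 < r) (hc : c ≤ r ∨ c ≤ d) :
    c ^ #(T.erase 0) ≤ ∏ i ∈ T, (r + i * d) :=
  calc c ^ #(T.erase 0) = ∏ _i ∈ T.erase 0, c := (prod_const c).symm
    _ ≤ ∏ i ∈ T.erase 0, (r + i * d) := prod_le_prod' fun i hi => by
        have : d ≤ i * d := Nat.le_mul_of_pos_left d (pos_of_ne_zero (ne_of_mem_erase hi))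
        omega
    _ ≤ ∏ i ∈ T, (r + i * d) :=
        prod_le_prod_of_subset_of_one_le' (erase_subset 0 T) fun i _ _ => by omega

end ArithmeticProgression

/-- For sufficiently large `N`: either both `d < N²` and `r < N²`, or the number `M`
of terms removed in the Erdős elimination process satisfies `M > N/2`. -/
theorem small_params_or_many_removed :
    ∃ N₀ : ℕ, ∀ N ≥ N₀, ∀ d r : ℕ, 0 < d → 0 < r → Nat.gcd d r = 1 →
      ∀ f : ℕ → ℕ,
        (∀ p ∈ (∏ i ∈ Finset.range N, (r + i * d)).primeFactors,
          f p < N ∧ ∀ j < N, padicValNat p (r + j * d) ≤ padicValNat p (r + f p * d)) →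
        ∀ M : ℕ, M = ((∏ i ∈ Finset.range N, (r + i * d)).primeFactors.image f).card →
          (d < N ^ 2 ∧ r < N ^ 2) ∨ N < 2 * M := by
  refine ⟨3, fun N hN d r _ hr hdr f hf M hM => or_iff_not_imp_right.mpr fun hMN => ?_⟩
  by_contra hlarge
  set S := (∏ i ∈ range N, (r + i * d)).primeFactors.image f
  have hS : S ⊆ range N := image_subset_iff.mpr fun p hp => mem_range.mpr (hf p hp).1
  have hcard : N - M - 1 ≤ #((range N \ S).erase 0) := by
    have := pred_card_le_card_erase (s := range N \ S) (a := 0)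
    rw [card_sdiff_of_subset hS, card_range, ← hM] at this
    exact this
  have hlow := pow_card_erase_zero_le_prod (T := range N \ S) (d := d) (c := N ^ 2) hr
    (by rw [not_and_or, not_lt, not_lt] at hlarge; exact hlarge.symm)
  have hdvd := prod_sdiff_image_dvd_factorial hr hdr hf
  obtain ⟨n, rfl⟩ : ∃ n, N = n + 3 := ⟨N - 3, by omega⟩
  refine lt_irrefl ((n + 3) ^ (n + 1)) ?_
  calc (n + 3) ^ (n + 1) ≤ ((n + 3) ^ 2) ^ #((range (n + 3) \ S).erase 0) := by
        rw [← pow_mul]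
        exact Nat.pow_le_pow_right (by omega) (by omega)
    _ ≤ ∏ i ∈ range (n + 3) \ S, (r + i * d) := hlow
    _ ≤ (n + 2)! := le_of_dvd (factorial_pos _) hdvd
    _ < (n + 3) ^ (n + 1) := factorial_lt_pow_succ n
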